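/- Let X = c₀, or X = ℓ_p with 1 < p < ∞ and p ≠ 2. The set of all T ∈ 𝔅₁(X) such that the adjoint T* is an isometry of X* is nowhere dense in (𝔅₁(X), SOT). In particular, a typical T ∈ (𝔅₁(X), SOT) is such that T* is not an isometry. -/

import Mathlib

open Topology Filter
open scoped ZeroAtInfty ENNReal

noncomputable section

variable (X : Type*) [NormedAddCommGroup X] [NormedSpace ℂ X]

/-- The closed unit ball of the space of bounded linear operators on `X`. -/
abbrev Ball1 : Type _ := {T : X →L[ℂ] X // ‖T‖ ≤ 1}

/-- The strong operator topology on the unit ball: the topology of pointwise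
norm-convergence of operators. -/
def sot : TopologicalSpace (Ball1 X) :=
  TopologicalSpace.induced (fun T => (T.1 : X → X)) inferInstance

/-- The Banach-space adjoint of `T`, acting on the dual `X →L[ℂ] ℂ` by `f ↦ f ∘ T`. -/
def adj (T : X →L[ℂ] X) : (X →L[ℂ] ℂ) →L[ℂ] (X →L[ℂ] ℂ) :=
  (ContinuousLinearMap.compL ℂ X X ℂ).flip T

/-- The set of `T ∈ 𝔅₁(X)` whose adjoint is an isometry is nowhere dense in
`(𝔅₁(X), SOT)`; in particular, a typical `T ∈ (𝔅₁(X), SOT)` is such that `T*` is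
not an isometry. -/
def AdjointIsometriesNowhereDense : Prop :=
  @IsNowhereDense _ (sot X) {T : Ball1 X | Isometry (adj X T.1)} ∧
  {T : Ball1 X | ¬ Isometry (adj X T.1)} ∈ @residual _ (sot X)

end

open Real

section ScalarLemmas

variable {q r s t u v : ℝ}

private lemma rpow_pred_mul (hx : 0 < s) : s ^ r = s ^ (r - 1) * s := by
  nth_rewrite 1 [show r = r - 1 + 1 by ring]
  rw [Real.rpow_add_one hx.ne']

lemma my_strict_super (hr : 1 < r) (hs : 0 < s) (ht : 0 < t) :
    s ^ r + t ^ r < (s + t) ^ r := by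
  have h1 : s ^ r < (s + t) ^ (r - 1) * s := by
    rw [rpow_pred_mul hs]
    exact mul_lt_mul_of_pos_right (Real.rpow_lt_rpow hs.le (by linarith) (by linarith)) hs
  have h2 : t ^ r < (s + t) ^ (r - 1) * t := by
    rw [rpow_pred_mul ht]
    exact mul_lt_mul_of_pos_right (Real.rpow_lt_rpow ht.le (by linarith) (by linarith)) ht
  have h3 : (s + t) ^ (r - 1) * s + (s + t) ^ (r - 1) * t = (s + t) ^ r := by
    conv_rhs => rw [rpow_pred_mul (by linarith : (0:ℝ) < s + t)]
    ring
  linarith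

lemma my_strict_sub (hr0 : 0 < r) (hr : r < 1) (hs : 0 < s) (ht : 0 < t) :
    (s + t) ^ r < s ^ r + t ^ r := by
  have hst : 0 < s + t := by linarith
  have h1 : (s + t) ^ (r - 1) * s < s ^ r := by
    rw [rpow_pred_mul hs]
    exact mul_lt_mul_of_pos_right (Real.rpow_lt_rpow_of_neg hs (by linarith) (by linarith)) hs
  have h2 : (s + t) ^ (r - 1) * t < t ^ r := by
    rw [rpow_pred_mul ht]
    exact mul_lt_mul_of_pos_right (Real.rpow_lt_rpow_of_neg ht (by linarith) (by linarith)) ht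
  have h3 : (s + t) ^ (r - 1) * s + (s + t) ^ (r - 1) * t = (s + t) ^ r := by
    conv_rhs => rw [rpow_pred_mul hst]
    ring
  linarith

/-- non-strict superadditivity for r ≥ 1 -/
lemma my_super (hr : 1 ≤ r) (hs : 0 ≤ s) (ht : 0 ≤ t) :
    s ^ r + t ^ r ≤ (s + t) ^ r := by
  lift s to NNReal using hs
  lift t to NNReal using ht
  have := NNReal.add_rpow_le_rpow_add s t hr
  have h : ((s ^ r + t ^ r : NNReal) : ℝ) ≤ (((s + t) ^ r : NNReal) : ℝ) := by exact_mod_cast this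
  push_cast at h
  convert h using 2

/-- non-strict subadditivity for 0 ≤ r ≤ 1 -/
lemma my_sub (hr0 : 0 ≤ r) (hr : r ≤ 1) (hs : 0 ≤ s) (ht : 0 ≤ t) :
    (s + t) ^ r ≤ s ^ r + t ^ r := by
  lift s to NNReal using hs
  lift t to NNReal using ht
  have := NNReal.rpow_add_le_add_rpow s t hr0 hr
  have h : (((s + t) ^ r : NNReal) : ℝ) ≤ ((s ^ r + t ^ r : NNReal) : ℝ) := by exact_mod_cast this
  push_cast at h
  convert h using 2

/-- two-point convexity of `x ^ r`, `r ≥ 1`. -/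
lemma my_convex2 (hr : 1 ≤ r) (hu : 0 ≤ u) (hv : 0 ≤ v) :
    2 ^ (1 - r) * (u + v) ^ r ≤ u ^ r + v ^ r := by
  have hw : (2⁻¹ : NNReal) + 2⁻¹ = 1 := by
    rw [← NNReal.coe_inj]; push_cast; norm_num
  have h0 := NNReal.rpow_arith_mean_le_arith_mean2_rpow 2⁻¹ 2⁻¹ u.toNNReal v.toNNReal hw hr
  have h : ((u + v) / 2) ^ r ≤ (u ^ r + v ^ r) / 2 := by
    have hc : ((((2:NNReal)⁻¹ * u.toNNReal + 2⁻¹ * v.toNNReal) ^ r : NNReal) : ℝ)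
        ≤ (((2:NNReal)⁻¹ * u.toNNReal ^ r + 2⁻¹ * v.toNNReal ^ r : NNReal) : ℝ) := by
      exact_mod_cast h0
    push_cast at hc
    rw [Real.coe_toNNReal _ hu, Real.coe_toNNReal _ hv] at hc
    calc ((u + v) / 2) ^ r = (2⁻¹ * u + 2⁻¹ * v) ^ r := by ring_nf
      _ ≤ 2⁻¹ * u ^ r + 2⁻¹ * v ^ r := hc
      _ = (u ^ r + v ^ r) / 2 := by ring
  have hdiv : ((u + v) / 2) ^ r = (u + v) ^ r / 2 ^ r :=
    Real.div_rpow (by linarith) (by norm_num : (0:ℝ) ≤ 2) r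
  have h2r : (0:ℝ) < 2 ^ r := Real.rpow_pos_of_pos (by norm_num) r
  have hpow : (2:ℝ) ^ (1 - r) = 2 / 2 ^ r := by
    rw [Real.rpow_sub (by norm_num), Real.rpow_one]
  rw [hpow]
  rw [hdiv] at h
  calc 2 / 2 ^ r * (u + v) ^ r = 2 * ((u + v) ^ r / 2 ^ r) := by ring
    _ ≤ 2 * ((u ^ r + v ^ r) / 2) := by linarith
    _ = u ^ r + v ^ r := by ring

/-- two-point concavity of `x ^ r`, `0 < r ≤ 1`. -/
lemma my_concave2 (hr0 : 0 < r) (hr : r ≤ 1) (hu : 0 ≤ u) (hv : 0 ≤ v) :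
    u ^ r + v ^ r ≤ 2 ^ (1 - r) * (u + v) ^ r := by
  have h := my_convex2 (r := 1 / r) (by rw [le_div_iff₀ hr0]; linarith)
    (Real.rpow_nonneg hu r) (Real.rpow_nonneg hv r)
  rw [one_div, Real.rpow_rpow_inv hu hr0.ne', Real.rpow_rpow_inv hv hr0.ne'] at h
  -- h : 2 ^ (1 - r⁻¹) * (u ^ r + v ^ r) ^ r⁻¹ ≤ u + v
  have hA : (0:ℝ) ≤ u ^ r + v ^ r := by positivity
  have hp : (0:ℝ) < 2 ^ (1 - r⁻¹) := Real.rpow_pos_of_pos (by norm_num) _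
  have h2 : (u ^ r + v ^ r) ^ r⁻¹ ≤ (2 ^ ((1:ℝ) - r⁻¹))⁻¹ * (u + v) := by
    rw [← inv_mul_le_iff₀ (inv_pos.mpr hp), inv_inv]
    exact h
  have h3 : ((u ^ r + v ^ r) ^ r⁻¹) ^ r ≤ ((2 ^ ((1:ℝ) - r⁻¹))⁻¹ * (u + v)) ^ r :=
    Real.rpow_le_rpow (Real.rpow_nonneg hA _) h2 hr0.le
  rw [Real.rpow_inv_rpow hA hr0.ne'] at h3
  have h4 : ((2 ^ ((1:ℝ) - r⁻¹))⁻¹ * (u + v)) ^ r = 2 ^ (1 - r) * (u + v) ^ r := by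
    rw [Real.mul_rpow (by positivity) (by linarith),
      ← Real.rpow_neg (by norm_num : (0:ℝ) ≤ 2), ← Real.rpow_mul (by norm_num : (0:ℝ) ≤ 2)]
    congr 2
    field_simp
    ring
  rw [h4] at h3
  exact h3

end ScalarLemmas

section Clarkson

lemma my_par (z w : ℂ) :
    ‖z + w‖ ^ (2:ℝ) + ‖z - w‖ ^ (2:ℝ) = 2 * (‖z‖ ^ (2:ℝ) + ‖w‖ ^ (2:ℝ)) := by
  simp only [Real.rpow_two, Complex.sq_norm]
  simp only [Complex.normSq_apply, Complex.add_re, Complex.add_im, Complex.sub_re,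
    Complex.sub_im]
  ring

private lemma q_eq {x : ℝ} (hx : 0 ≤ x) (q : ℝ) : x ^ q = (x ^ (2:ℝ)) ^ (q/2) := by
  rw [← Real.rpow_mul hx, show (2:ℝ) * (q/2) = q by ring]

lemma clark_ge {q : ℝ} (hq : 2 < q) (z w : ℂ) :
    2 * (‖z‖ ^ q + ‖w‖ ^ q) ≤ ‖z + w‖ ^ q + ‖z - w‖ ^ q := by
  have hr : (1:ℝ) ≤ q / 2 := by linarith
  set r := q / 2 with hrdef
  set a := ‖z + w‖ ^ (2:ℝ) with ha
  set b := ‖z - w‖ ^ (2:ℝ) with hb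
  set s := ‖z‖ ^ (2:ℝ) with hs
  set t := ‖w‖ ^ (2:ℝ) with ht
  have ha0 : 0 ≤ a := Real.rpow_nonneg (norm_nonneg _) _
  have hb0 : 0 ≤ b := Real.rpow_nonneg (norm_nonneg _) _
  have hs0 : 0 ≤ s := Real.rpow_nonneg (norm_nonneg _) _
  have ht0 : 0 ≤ t := Real.rpow_nonneg (norm_nonneg _) _
  have hpar : a + b = 2 * (s + t) := my_par z w
  have key : 2 ^ ((1:ℝ) - r) * (2 * (s+t)) ^ r = 2 * (s+t) ^ r := by
    rw [Real.mul_rpow (by norm_num) (by linarith), ← mul_assoc,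
      ← Real.rpow_add (by norm_num : (0:ℝ) < 2)]
    rw [show (1:ℝ) - r + r = 1 by ring, Real.rpow_one]
  calc 2 * (‖z‖ ^ q + ‖w‖ ^ q) = 2 * (s ^ r + t ^ r) := by
        rw [q_eq (norm_nonneg z) q, q_eq (norm_nonneg w) q]
    _ ≤ 2 * (s + t) ^ r := by
        have := my_super hr hs0 ht0
        linarith
    _ = 2 ^ ((1:ℝ) - r) * (a + b) ^ r := by rw [hpar, key]
    _ ≤ a ^ r + b ^ r := my_convex2 hr ha0 hb0
    _ = ‖z + w‖ ^ q + ‖z - w‖ ^ q := by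
        rw [← q_eq (norm_nonneg _) q, ← q_eq (norm_nonneg _) q]

lemma clark_ge_strict {q : ℝ} (hq : 2 < q) {z w : ℂ} (hz : z ≠ 0) (hw : w ≠ 0) :
    2 * (‖z‖ ^ q + ‖w‖ ^ q) < ‖z + w‖ ^ q + ‖z - w‖ ^ q := by
  have hr : (1:ℝ) < q / 2 := by linarith
  set r := q / 2 with hrdef
  set a := ‖z + w‖ ^ (2:ℝ) with ha
  set b := ‖z - w‖ ^ (2:ℝ) with hb
  set s := ‖z‖ ^ (2:ℝ) with hs
  set t := ‖w‖ ^ (2:ℝ) with ht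
  have ha0 : 0 ≤ a := Real.rpow_nonneg (norm_nonneg _) _
  have hb0 : 0 ≤ b := Real.rpow_nonneg (norm_nonneg _) _
  have hs0 : 0 < s := Real.rpow_pos_of_pos (norm_pos_iff.mpr hz) _
  have ht0 : 0 < t := Real.rpow_pos_of_pos (norm_pos_iff.mpr hw) _
  have hpar : a + b = 2 * (s + t) := my_par z w
  have key : 2 ^ ((1:ℝ) - r) * (2 * (s+t)) ^ r = 2 * (s+t) ^ r := by
    rw [Real.mul_rpow (by norm_num) (by linarith), ← mul_assoc,
      ← Real.rpow_add (by norm_num : (0:ℝ) < 2)]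
    rw [show (1:ℝ) - r + r = 1 by ring, Real.rpow_one]
  calc 2 * (‖z‖ ^ q + ‖w‖ ^ q) = 2 * (s ^ r + t ^ r) := by
        rw [q_eq (norm_nonneg z) q, q_eq (norm_nonneg w) q]
    _ < 2 * (s + t) ^ r := by
        have := my_strict_super hr hs0 ht0
        linarith
    _ = 2 ^ ((1:ℝ) - r) * (a + b) ^ r := by rw [hpar, key]
    _ ≤ a ^ r + b ^ r := my_convex2 hr.le ha0 hb0
    _ = ‖z + w‖ ^ q + ‖z - w‖ ^ q := by
        rw [← q_eq (norm_nonneg _) q, ← q_eq (norm_nonneg _) q]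

lemma clark_le' {q : ℝ} (hq1 : 1 ≤ q) (hq : q < 2) (z w : ℂ) :
    ‖z + w‖ ^ q + ‖z - w‖ ^ q ≤ 2 * (‖z‖ ^ q + ‖w‖ ^ q) := by
  have hr0 : (0:ℝ) < q / 2 := by linarith
  have hr : q / 2 ≤ 1 := by linarith
  set r := q / 2 with hrdef
  set a := ‖z + w‖ ^ (2:ℝ) with ha
  set b := ‖z - w‖ ^ (2:ℝ) with hb
  set s := ‖z‖ ^ (2:ℝ) with hs
  set t := ‖w‖ ^ (2:ℝ) with ht
  have ha0 : 0 ≤ a := Real.rpow_nonneg (norm_nonneg _) _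
  have hb0 : 0 ≤ b := Real.rpow_nonneg (norm_nonneg _) _
  have hs0 : 0 ≤ s := Real.rpow_nonneg (norm_nonneg _) _
  have ht0 : 0 ≤ t := Real.rpow_nonneg (norm_nonneg _) _
  have hpar : a + b = 2 * (s + t) := my_par z w
  have key : 2 ^ ((1:ℝ) - r) * (2 * (s+t)) ^ r = 2 * (s+t) ^ r := by
    rw [Real.mul_rpow (by norm_num) (by linarith), ← mul_assoc,
      ← Real.rpow_add (by norm_num : (0:ℝ) < 2)]
    rw [show (1:ℝ) - r + r = 1 by ring, Real.rpow_one]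
  calc ‖z + w‖ ^ q + ‖z - w‖ ^ q = a ^ r + b ^ r := by
        rw [q_eq (norm_nonneg _) q, q_eq (norm_nonneg _) q]
    _ ≤ 2 ^ ((1:ℝ) - r) * (a + b) ^ r := my_concave2 hr0 hr ha0 hb0
    _ = 2 * (s + t) ^ r := by rw [hpar, key]
    _ ≤ 2 * (s ^ r + t ^ r) := by
        have := my_sub hr0.le hr hs0 ht0
        linarith
    _ = 2 * (‖z‖ ^ q + ‖w‖ ^ q) := by
        rw [← q_eq (norm_nonneg _) q, ← q_eq (norm_nonneg _) q]

lemma clark_le_strict' {q : ℝ} (hq1 : 1 ≤ q) (hq : q < 2) {z w : ℂ} (hz : z ≠ 0) (hw : w ≠ 0) :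
    ‖z + w‖ ^ q + ‖z - w‖ ^ q < 2 * (‖z‖ ^ q + ‖w‖ ^ q) := by
  have hr0 : (0:ℝ) < q / 2 := by linarith
  have hr : q / 2 < 1 := by linarith
  set r := q / 2 with hrdef
  set a := ‖z + w‖ ^ (2:ℝ) with ha
  set b := ‖z - w‖ ^ (2:ℝ) with hb
  set s := ‖z‖ ^ (2:ℝ) with hs
  set t := ‖w‖ ^ (2:ℝ) with ht
  have ha0 : 0 ≤ a := Real.rpow_nonneg (norm_nonneg _) _
  have hb0 : 0 ≤ b := Real.rpow_nonneg (norm_nonneg _) _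
  have hs0 : 0 < s := Real.rpow_pos_of_pos (norm_pos_iff.mpr hz) _
  have ht0 : 0 < t := Real.rpow_pos_of_pos (norm_pos_iff.mpr hw) _
  have hpar : a + b = 2 * (s + t) := my_par z w
  have key : 2 ^ ((1:ℝ) - r) * (2 * (s+t)) ^ r = 2 * (s+t) ^ r := by
    rw [Real.mul_rpow (by norm_num) (by linarith), ← mul_assoc,
      ← Real.rpow_add (by norm_num : (0:ℝ) < 2)]
    rw [show (1:ℝ) - r + r = 1 by ring, Real.rpow_one]
  calc ‖z + w‖ ^ q + ‖z - w‖ ^ q = a ^ r + b ^ r := by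
        rw [q_eq (norm_nonneg _) q, q_eq (norm_nonneg _) q]
    _ ≤ 2 ^ ((1:ℝ) - r) * (a + b) ^ r := my_concave2 hr0 hr.le ha0 hb0
    _ = 2 * (s + t) ^ r := by rw [hpar, key]
    _ < 2 * (s ^ r + t ^ r) := by
        have := my_strict_sub hr0 hr hs0 ht0
        linarith
    _ = 2 * (‖z‖ ^ q + ‖w‖ ^ q) := by
        rw [← q_eq (norm_nonneg _) q, ← q_eq (norm_nonneg _) q]

end Clarkson

noncomputable section Abstract

variable {X : Type*} [NormedAddCommGroup X] [NormedSpace ℂ X]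

lemma adj_apply (T : X →L[ℂ] X) (f : X →L[ℂ] ℂ) (x : X) : adj X T f x = f (T x) := rfl

lemma my_tsum_pair {k l : ℕ} (hkl : k ≠ l) {f : ℕ → ℝ} {c d : ℝ}
    (hk : f k = c) (hl : f l = d) (h0 : ∀ j, j ≠ k → j ≠ l → f j = 0) :
    ∑' j, f j = c + d := by
  rw [tsum_eq_sum (s := ({k, l} : Finset ℕ)) (by
    intro b hb
    simp only [Finset.mem_insert, Finset.mem_singleton] at hb
    push_neg at hb
    exact h0 b hb.1 hb.2)]
  rw [Finset.sum_pair hkl, hk, hl]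

lemma my_tsum_single {k : ℕ} {f : ℕ → ℝ} {c : ℝ}
    (hk : f k = c) (h0 : ∀ j, j ≠ k → f j = 0) : ∑' j, f j = c := by
  rw [tsum_eq_sum (s := ({k} : Finset ℕ)) (by
    intro b hb
    simp only [Finset.mem_singleton] at hb
    exact h0 b hb)]
  rw [Finset.sum_singleton, hk]

lemma rows_disjoint {q : ℝ} (hq1 : 1 ≤ q) (hq2 : q ≠ 2) {e : ℕ → X}
    (hSum : ∀ g : X →L[ℂ] ℂ, Summable fun j => ‖g (e j)‖ ^ q)
    (hNorm : ∀ g : X →L[ℂ] ℂ, ‖g‖ ^ q = ∑' j, ‖g (e j)‖ ^ q)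
    {T : X →L[ℂ] X} (hT : Isometry (adj X T))
    {u w : X →L[ℂ] ℂ} {k l : ℕ} (hkl : k ≠ l)
    (hu : ∀ j, u (e j) = if j = k then 1 else 0)
    (hw : ∀ j, w (e j) = if j = l then 1 else 0) (j : ℕ) :
    u (T (e j)) * w (T (e j)) = 0 := by
  have hq0 : q ≠ 0 := by intro h; rw [h] at hq1; norm_num at hq1
  have hnm : ∀ v : X →L[ℂ] ℂ, ‖adj X T v‖ = ‖v‖ :=
    fun v => (AddMonoidHomClass.isometry_iff_norm _).mp hT v
  set a : ℕ → ℂ := fun i => u (T (e i)) with ha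
  set b : ℕ → ℂ := fun i => w (T (e i)) with hb
  have hfa : ∀ i, (adj X T u) (e i) = a i := fun i => rfl
  have hfb : ∀ i, (adj X T w) (e i) = b i := fun i => rfl
  have hfab : ∀ i, (adj X T (u + w)) (e i) = a i + b i := by
    intro i; rw [map_add]; rfl
  have hfab' : ∀ i, (adj X T (u - w)) (e i) = a i - b i := by
    intro i; rw [map_sub]; rfl
  -- summability of all four coefficient series
  have sa : Summable fun i => ‖a i‖ ^ q := (hSum (adj X T u)).congr fun i => by rw [hfa]
  have sb : Summable fun i => ‖b i‖ ^ q := (hSum (adj X T w)).congr fun i => by rw [hfb]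
  have sab : Summable fun i => ‖a i + b i‖ ^ q :=
    (hSum (adj X T (u + w))).congr fun i => by rw [hfab]
  have sab' : Summable fun i => ‖a i - b i‖ ^ q :=
    (hSum (adj X T (u - w))).congr fun i => by rw [hfab']
  -- values of the four coefficient series
  have Su : ‖u‖ ^ q = 1 := by
    rw [hNorm u]
    refine my_tsum_single (k := k) ?_ ?_
    · rw [hu k, if_pos rfl, norm_one, Real.one_rpow]
    · intro i hik
      rw [hu i, if_neg hik, norm_zero, Real.zero_rpow hq0]
  have Sw : ‖w‖ ^ q = 1 := by
    rw [hNorm w]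
    refine my_tsum_single (k := l) ?_ ?_
    · rw [hw l, if_pos rfl, norm_one, Real.one_rpow]
    · intro i hil
      rw [hw i, if_neg hil, norm_zero, Real.zero_rpow hq0]
  have Suw : ‖u + w‖ ^ q = 2 := by
    rw [hNorm (u + w)]
    have : (1:ℝ) + 1 = 2 := by norm_num
    rw [← this]
    refine my_tsum_pair hkl ?_ ?_ ?_
    · rw [ContinuousLinearMap.add_apply, hu k, hw k, if_pos rfl, if_neg hkl, add_zero,
        norm_one, Real.one_rpow]
    · rw [ContinuousLinearMap.add_apply, hu l, hw l, if_pos rfl, if_neg hkl.symm, zero_add,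
        norm_one, Real.one_rpow]
    · intro i hik hil
      rw [ContinuousLinearMap.add_apply, hu i, hw i, if_neg hik, if_neg hil, add_zero,
        norm_zero, Real.zero_rpow hq0]
  have Suw' : ‖u - w‖ ^ q = 2 := by
    rw [hNorm (u - w)]
    have : (1:ℝ) + 1 = 2 := by norm_num
    rw [← this]
    refine my_tsum_pair hkl ?_ ?_ ?_
    · rw [ContinuousLinearMap.sub_apply, hu k, hw k, if_pos rfl, if_neg hkl, sub_zero,
        norm_one, Real.one_rpow]
    · rw [ContinuousLinearMap.sub_apply, hu l, hw l, if_pos rfl, if_neg hkl.symm, zero_sub,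
        norm_neg, norm_one, Real.one_rpow]
    · intro i hik hil
      rw [ContinuousLinearMap.sub_apply, hu i, hw i, if_neg hik, if_neg hil, sub_zero,
        norm_zero, Real.zero_rpow hq0]
  have Sa : ∑' i, ‖a i‖ ^ q = 1 := by
    have h1 : ∑' i, ‖a i‖ ^ q = ∑' i, ‖(adj X T u) (e i)‖ ^ q :=
      tsum_congr fun i => by rw [hfa]
    rw [h1, ← hNorm, hnm, Su]
  have Sb : ∑' i, ‖b i‖ ^ q = 1 := by
    have h1 : ∑' i, ‖b i‖ ^ q = ∑' i, ‖(adj X T w) (e i)‖ ^ q :=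
      tsum_congr fun i => by rw [hfb]
    rw [h1, ← hNorm, hnm, Sw]
  have Sab : ∑' i, ‖a i + b i‖ ^ q = 2 := by
    have h1 : ∑' i, ‖a i + b i‖ ^ q = ∑' i, ‖(adj X T (u + w)) (e i)‖ ^ q :=
      tsum_congr fun i => by rw [hfab]
    rw [h1, ← hNorm, hnm, Suw]
  have Sab' : ∑' i, ‖a i - b i‖ ^ q = 2 := by
    have h1 : ∑' i, ‖a i - b i‖ ^ q = ∑' i, ‖(adj X T (u - w)) (e i)‖ ^ q :=
      tsum_congr fun i => by rw [hfab']
    rw [h1, ← hNorm, hnm, Suw']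
  by_contra hc
  rw [mul_eq_zero] at hc
  push_neg at hc
  obtain ⟨hc1, hc2⟩ := hc
  have hPhi : ∑' i, (‖a i + b i‖ ^ q + ‖a i - b i‖ ^ q) = 4 := by
    rw [Summable.tsum_add sab sab', Sab, Sab']; norm_num
  have hPsi : ∑' i, 2 * (‖a i‖ ^ q + ‖b i‖ ^ q) = 4 := by
    rw [tsum_mul_left, Summable.tsum_add sa sb, Sa, Sb]; norm_num
  rcases hq2.lt_or_gt with h2 | h2
  · have hlt : (∑' i, (‖a i + b i‖ ^ q + ‖a i - b i‖ ^ q))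
        < ∑' i, 2 * (‖a i‖ ^ q + ‖b i‖ ^ q) := by
      refine Summable.tsum_lt_tsum (fun i => clark_le' hq1 h2 (a i) (b i))
        (clark_le_strict' hq1 h2 hc1 hc2) (sab.add sab') (((sa.add sb)).mul_left 2)
    rw [hPhi, hPsi] at hlt
    exact lt_irrefl _ hlt
  · have hlt : (∑' i, 2 * (‖a i‖ ^ q + ‖b i‖ ^ q))
        < ∑' i, (‖a i + b i‖ ^ q + ‖a i - b i‖ ^ q) := by
      refine Summable.tsum_lt_tsum (fun i => clark_ge h2 (a i) (b i))
        (clark_ge_strict h2 hc1 hc2) (((sa.add sb)).mul_left 2) (sab.add sab')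
    rw [hPhi, hPsi] at hlt
    exact lt_irrefl _ hlt

end Abstract

theorem aind_abstract {X : Type*} [NormedAddCommGroup X] [NormedSpace ℂ X]
    {q : ℝ} (hq1 : 1 ≤ q) (hq2 : q ≠ 2)
    (e : ℕ → X) (coord : ℕ → X →L[ℂ] ℂ)
    (hce : ∀ k j, coord k (e j) = if j = k then 1 else 0)
    (he : ∀ j, ‖e j‖ ≤ 1) (hcn : ‖coord 0‖ ≤ 1)
    (hSum : ∀ g : X →L[ℂ] ℂ, Summable fun j => ‖g (e j)‖ ^ q)
    (hNorm : ∀ g : X →L[ℂ] ℂ, ‖g‖ ^ q = ∑' j, ‖g (e j)‖ ^ q) :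
    AdjointIsometriesNowhereDense X := by
  letI : TopologicalSpace (Ball1 X) := sot X
  set D : Set (Ball1 X) :=
    {T | ∀ j k l, k ≠ l → coord k (T.1 (e j)) * coord l (T.1 (e j)) = 0} with hD
  have hED : {T : Ball1 X | Isometry (adj X T.1)} ⊆ D := by
    intro T hT j k l hklne
    exact rows_disjoint hq1 hq2 hSum hNorm hT hklne (hce k) (hce l) j
  have hDc : IsClosed D := by
    have hDeq : D = ⋂ (j : ℕ), ⋂ (k : ℕ), ⋂ (l : ℕ),
        {T : Ball1 X | k ≠ l → coord k (T.1 (e j)) * coord l (T.1 (e j)) = 0} := by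
      ext T
      simp only [hD, Set.mem_setOf_eq, Set.mem_iInter]
    rw [hDeq]
    refine isClosed_iInter fun j => isClosed_iInter fun k => isClosed_iInter fun l => ?_
    by_cases hkl : k = l
    · have : {T : Ball1 X | k ≠ l → coord k (T.1 (e j)) * coord l (T.1 (e j)) = 0}
          = Set.univ := by
        ext T; simp [hkl]
      rw [this]; exact isClosed_univ
    · have hcont : Continuous fun T : Ball1 X =>
          coord k (T.1 (e j)) * coord l (T.1 (e j)) := by
        have h1 : Continuous fun T : Ball1 X => T.1 (e j) :=
          (continuous_apply (e j)).comp continuous_induced_dom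
        exact ((coord k).continuous.comp h1).mul ((coord l).continuous.comp h1)
      have : {T : Ball1 X | k ≠ l → coord k (T.1 (e j)) * coord l (T.1 (e j)) = 0}
          = (fun T : Ball1 X => coord k (T.1 (e j)) * coord l (T.1 (e j))) ⁻¹' {0} := by
        ext T; simp [hkl]
      rw [this]
      exact isClosed_singleton.preimage hcont
  have hDi : interior D = ∅ := by
    rw [Set.eq_empty_iff_forall_notMem]
    intro T₀ hT₀
    obtain ⟨U, hUo, hTU, hUD⟩ : ∃ U : Set (Ball1 X), IsOpen U ∧ T₀ ∈ U ∧ U ⊆ D :=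
      ⟨interior D, isOpen_interior, hT₀, interior_subset⟩
    obtain ⟨W, hWo, hWU⟩ := isOpen_induced_iff.mp hUo
    have hTW : (fun x => T₀.1 x) ∈ W := by
      rw [← hWU] at hTU; exact hTU
    obtain ⟨I, V, hIV, hpi⟩ := isOpen_pi_iff.mp hWo _ hTW
    have hrad : ∀ x : X, ∃ r : ℝ, 0 < r ∧ (x ∈ I → Metric.ball (T₀.1 x) r ⊆ V x) := by
      intro x
      by_cases hx : x ∈ I
      · obtain ⟨r, hr, hb⟩ := Metric.isOpen_iff.mp (hIV x hx).1 _ (hIV x hx).2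
        exact ⟨r, hr, fun _ => hb⟩
      · exact ⟨1, one_pos, fun h => absurd h hx⟩
    choose r hr0 hrb using hrad
    obtain ⟨δ, hδ0, hδ1, hδr⟩ : ∃ δ : ℝ, 0 < δ ∧ δ ≤ 1 ∧
        ∀ x ∈ I, δ * (‖T₀.1 x‖ + ‖x‖) < r x := by
      rcases I.eq_empty_or_nonempty with hI | hI
      · exact ⟨1, one_pos, le_refl 1, by simp [hI]⟩
      · set m := I.inf' hI (fun x => r x / (‖T₀.1 x‖ + ‖x‖ + 1)) with hm
        have hm0 : 0 < m := by
          rw [hm, Finset.lt_inf'_iff]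
          intro x _
          have := hr0 x
          positivity
        refine ⟨min m 1, lt_min hm0 one_pos, min_le_right _ _, ?_⟩
        intro x hx
        have h1 : min m 1 ≤ r x / (‖T₀.1 x‖ + ‖x‖ + 1) :=
          le_trans (min_le_left _ _) (Finset.inf'_le _ hx)
        have hn : (0:ℝ) ≤ ‖T₀.1 x‖ + ‖x‖ := by positivity
        calc min m 1 * (‖T₀.1 x‖ + ‖x‖) ≤ r x / (‖T₀.1 x‖ + ‖x‖ + 1) * (‖T₀.1 x‖ + ‖x‖) :=
            mul_le_mul_of_nonneg_right h1 hn
          _ < r x := by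
            rw [div_mul_eq_mul_div, div_lt_iff₀ (by linarith)]
            nlinarith [hr0 x]
    -- the two perturbations
    have h2i : ‖(2⁻¹ : ℂ)‖ = 2⁻¹ := by
      rw [norm_inv]
      simp
    have hvn : ∀ i j : ℕ, ‖(2⁻¹ : ℂ) • (e i + e j)‖ ≤ 1 := by
      intro i j
      rw [norm_smul, h2i]
      calc (2:ℝ)⁻¹ * ‖e i + e j‖ ≤ 2⁻¹ * (‖e i‖ + ‖e j‖) := by
            have := norm_add_le (e i) (e j)
            linarith
        _ ≤ 2⁻¹ * (1 + 1) := by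
            have := he i; have := he j
            linarith
        _ = 1 := by norm_num
    set v0 : X := (2⁻¹ : ℂ) • (e 0 + e 1) with hv0
    set v1 : X := (2⁻¹ : ℂ) • (e 2 + e 3) with hv1
    set S0 : X →L[ℂ] X := (coord 0).smulRight v0 with hS0
    set S1 : X →L[ℂ] X := (coord 0).smulRight v1 with hS1
    have hSn : ∀ (S : X →L[ℂ] X), (∀ x, S x = (coord 0 x) • (S (e 0))) → True := fun _ _ => trivial
    have hS0x : ∀ x, ‖S0 x‖ ≤ ‖x‖ := by
      intro x
      rw [hS0, ContinuousLinearMap.smulRight_apply, norm_smul]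
      calc ‖coord 0 x‖ * ‖v0‖ ≤ (‖coord 0‖ * ‖x‖) * 1 :=
            mul_le_mul ((coord 0).le_opNorm x) (hvn 0 1) (norm_nonneg _)
              (by positivity)
        _ ≤ 1 * ‖x‖ * 1 := by
            have := mul_le_mul_of_nonneg_right hcn (norm_nonneg x)
            linarith
        _ = ‖x‖ := by ring
    have hS1x : ∀ x, ‖S1 x‖ ≤ ‖x‖ := by
      intro x
      rw [hS1, ContinuousLinearMap.smulRight_apply, norm_smul]
      calc ‖coord 0 x‖ * ‖v1‖ ≤ (‖coord 0‖ * ‖x‖) * 1 :=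
            mul_le_mul ((coord 0).le_opNorm x) (hvn 2 3) (norm_nonneg _)
              (by positivity)
        _ ≤ 1 * ‖x‖ * 1 := by
            have := mul_le_mul_of_nonneg_right hcn (norm_nonneg x)
            linarith
        _ = ‖x‖ := by ring
    have hd1 : ‖(1 - (δ:ℂ))‖ = 1 - δ := by
      have : (1 - (δ:ℂ)) = ((1 - δ : ℝ) : ℂ) := by push_cast; ring
      rw [this, Complex.norm_real, Real.norm_eq_abs, abs_of_nonneg (by linarith)]
    have hdn : ‖((δ:ℝ) : ℂ)‖ = δ := by
      rw [Complex.norm_real, Real.norm_eq_abs, abs_of_nonneg hδ0.le]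
    -- build the perturbed operators
    have key : ∀ S : X →L[ℂ] X, (∀ x, ‖S x‖ ≤ ‖x‖) →
        ∃ T' : Ball1 X, T'.1 = (1 - (δ:ℂ)) • T₀.1 + (δ:ℂ) • S ∧ T' ∈ U := by
      intro S hSx
      have hTnorm : ‖(1 - (δ:ℂ)) • T₀.1 + (δ:ℂ) • S‖ ≤ 1 := by
        refine ContinuousLinearMap.opNorm_le_bound _ (by norm_num) (fun x => ?_)
        rw [one_mul]
        simp only [ContinuousLinearMap.add_apply, ContinuousLinearMap.smul_apply]
        calc ‖(1 - (δ:ℂ)) • T₀.1 x + (δ:ℂ) • S x‖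
            ≤ ‖(1 - (δ:ℂ)) • T₀.1 x‖ + ‖(δ:ℂ) • S x‖ := norm_add_le _ _
          _ = (1 - δ) * ‖T₀.1 x‖ + δ * ‖S x‖ := by rw [norm_smul, norm_smul, hd1, hdn]
          _ ≤ (1 - δ) * ‖x‖ + δ * ‖x‖ := by
              have h1 : ‖T₀.1 x‖ ≤ ‖x‖ := by
                have h2 := T₀.1.le_opNorm x
                nlinarith [T₀.2, norm_nonneg x]
              have h2 := hSx x
              have h3 : (0:ℝ) ≤ 1 - δ := by linarith
              nlinarith
          _ = ‖x‖ := by ring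
      refine ⟨⟨(1 - (δ:ℂ)) • T₀.1 + (δ:ℂ) • S, hTnorm⟩, rfl, ?_⟩
      rw [← hWU]
      apply hpi
      rw [Set.mem_pi]
      intro x hx
      have hdist : ‖((1 - (δ:ℂ)) • T₀.1 + (δ:ℂ) • S) x - T₀.1 x‖ < r x := by
        have heq : ((1 - (δ:ℂ)) • T₀.1 + (δ:ℂ) • S) x - T₀.1 x = (δ:ℂ) • (S x - T₀.1 x) := by
          simp only [ContinuousLinearMap.add_apply, ContinuousLinearMap.smul_apply]
          rw [smul_sub]
          rw [sub_smul, one_smul]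
          abel
        rw [heq, norm_smul, hdn]
        calc δ * ‖S x - T₀.1 x‖ ≤ δ * (‖S x‖ + ‖T₀.1 x‖) := by
              have := norm_sub_le (S x) (T₀.1 x)
              have := mul_le_mul_of_nonneg_left (norm_sub_le (S x) (T₀.1 x)) hδ0.le
              linarith
          _ ≤ δ * (‖x‖ + ‖T₀.1 x‖) := by
              have := hSx x
              nlinarith
          _ = δ * (‖T₀.1 x‖ + ‖x‖) := by ring
          _ < r x := hδr x hx
      exact hrb x hx (by rwa [Metric.mem_ball, dist_eq_norm])
    obtain ⟨T0', hT0'eq, hT0'U⟩ := key S0 hS0x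
    obtain ⟨T1', hT1'eq, hT1'U⟩ := key S1 hS1x
    have hA := hUD hT0'U
    have hB := hUD hT1'U
    rw [hD, Set.mem_setOf_eq] at hA hB
    -- coefficients of the first column
    set c : ℂ := (δ:ℂ) * 2⁻¹ with hc
    have hcne : c ≠ 0 := by
      rw [hc]
      apply mul_ne_zero
      · exact_mod_cast ne_of_gt hδ0
      · norm_num
    set Wc : ℕ → ℂ := fun k => coord k (T₀.1 (e 0)) with hWc
    have hcoordv0 : ∀ k : ℕ, coord k v0 = 2⁻¹ * ((if (0:ℕ) = k then (1:ℂ) else 0) + (if (1:ℕ) = k then 1 else 0)) := by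
      intro k
      rw [hv0, map_smul, map_add, hce k 0, hce k 1]
      simp [smul_eq_mul]
    have hcoordv1 : ∀ k : ℕ, coord k v1 = 2⁻¹ * ((if (2:ℕ) = k then (1:ℂ) else 0) + (if (3:ℕ) = k then 1 else 0)) := by
      intro k
      rw [hv1, map_smul, map_add, hce k 2, hce k 3]
      simp [smul_eq_mul]
    have hS0e : S0 (e 0) = v0 := by
      rw [hS0, ContinuousLinearMap.smulRight_apply, hce 0 0]
      simp
    have hS1e : S1 (e 0) = v1 := by
      rw [hS1, ContinuousLinearMap.smulRight_apply, hce 0 0]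
      simp
    have hAk : ∀ k : ℕ, coord k (T0'.1 (e 0))
        = (1 - (δ:ℂ)) * Wc k + (δ:ℂ) * coord k v0 := by
      intro k
      rw [hT0'eq]
      simp only [ContinuousLinearMap.add_apply, ContinuousLinearMap.smul_apply]
      rw [map_add, map_smul, map_smul, hS0e, smul_eq_mul, smul_eq_mul, hWc]
    have hBk : ∀ k : ℕ, coord k (T1'.1 (e 0))
        = (1 - (δ:ℂ)) * Wc k + (δ:ℂ) * coord k v1 := by
      intro k
      rw [hT1'eq]
      simp only [ContinuousLinearMap.add_apply, ContinuousLinearMap.smul_apply]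
      rw [map_add, map_smul, map_smul, hS1e, smul_eq_mul, smul_eq_mul, hWc]
    set A : ℕ → ℂ := fun k => coord k (T0'.1 (e 0)) with hAdef
    set B : ℕ → ℂ := fun k => coord k (T1'.1 (e 0)) with hBdef
    have hA0 : A 0 = (1 - (δ:ℂ)) * Wc 0 + c := by
      simp only [hAdef]; rw [hAk 0, hcoordv0 0, hc]; norm_num
    have hA1 : A 1 = (1 - (δ:ℂ)) * Wc 1 + c := by
      simp only [hAdef]; rw [hAk 1, hcoordv0 1, hc]; norm_num
    have hA2 : A 2 = (1 - (δ:ℂ)) * Wc 2 := by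
      simp only [hAdef]; rw [hAk 2, hcoordv0 2]; norm_num
    have hB0 : B 0 = (1 - (δ:ℂ)) * Wc 0 := by
      simp only [hBdef]; rw [hBk 0, hcoordv1 0]; norm_num
    have hB1 : B 1 = (1 - (δ:ℂ)) * Wc 1 := by
      simp only [hBdef]; rw [hBk 1, hcoordv1 1]; norm_num
    have hB2 : B 2 = (1 - (δ:ℂ)) * Wc 2 + c := by
      simp only [hBdef]; rw [hBk 2, hcoordv1 2, hc]; norm_num
    have hAmul : ∀ k l : ℕ, k ≠ l → A k * A l = 0 := fun k l h => hA 0 k l h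
    have hBmul : ∀ k l : ℕ, k ≠ l → B k * B l = 0 := fun k l h => hB 0 k l h
    by_cases h0 : A 0 = 0
    · have hB0ne : B 0 ≠ 0 := by
        intro hB0z
        exact hcne (by linear_combination h0 - hA0 + hB0 - hB0z)
      have hB1z : B 1 = 0 := by
        rcases mul_eq_zero.mp (hBmul 0 1 (by norm_num)) with h | h
        · exact absurd h hB0ne
        · exact h
      have hB2z : B 2 = 0 := by
        rcases mul_eq_zero.mp (hBmul 0 2 (by norm_num)) with h | h
        · exact absurd h hB0ne
        · exact h
      have hA1v : A 1 = c := by linear_combination hA1 + hB1z - hB1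
      have hA2v : A 2 = -c := by linear_combination hA2 - hB2 + hB2z
      have h12 := hAmul 1 2 (by norm_num)
      rw [hA1v, hA2v] at h12
      have hcc : c * c = 0 := by linear_combination -h12
      exact hcne (mul_self_eq_zero.mp hcc)
    · have hA1z : A 1 = 0 := by
        rcases mul_eq_zero.mp (hAmul 0 1 (by norm_num)) with h | h
        · exact absurd h h0
        · exact h
      have hA2z : A 2 = 0 := by
        rcases mul_eq_zero.mp (hAmul 0 2 (by norm_num)) with h | h
        · exact absurd h h0
        · exact h
      have hB1v : B 1 = -c := by linear_combination hB1 - hA1 + hA1z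
      have hB2v : B 2 = c := by linear_combination hB2 + hA2z - hA2
      have h12 := hBmul 1 2 (by norm_num)
      rw [hB1v, hB2v] at h12
      have hcc : c * c = 0 := by linear_combination -h12
      exact hcne (mul_self_eq_zero.mp hcc)
  -- conclude
  have hclos : closure {T : Ball1 X | Isometry (adj X T.1)} ⊆ D :=
    closure_minimal hED hDc
  have hnd : IsNowhereDense {T : Ball1 X | Isometry (adj X T.1)} := by
    have h1 : interior (closure {T : Ball1 X | Isometry (adj X T.1)}) ⊆ interior D :=
      interior_mono hclos
    rw [hDi] at h1
    exact Set.eq_empty_iff_forall_notMem.mpr fun x hx => (h1 hx).elim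
  refine ⟨hnd, ?_⟩
  have hopen : IsOpen (closure {T : Ball1 X | Isometry (adj X T.1)})ᶜ :=
    isClosed_closure.isOpen_compl
  have hdense : Dense (closure {T : Ball1 X | Isometry (adj X T.1)})ᶜ :=
    interior_eq_empty_iff_dense_compl.mp hnd
  have hres := residual_of_dense_open hopen hdense
  refine Filter.mem_of_superset hres ?_
  intro T hT
  simp only [Set.mem_compl_iff, Set.mem_setOf_eq] at hT ⊢
  intro hiso
  exact hT (subset_closure hiso)

noncomputable section LpInst

variable {p : ℝ≥0∞} [Fact (1 ≤ p)]

/-- coordinate functional on lp -/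
def lpCoord (hp : p ≠ 0) (k : ℕ) : lp (fun _ : ℕ => ℂ) p →L[ℂ] ℂ :=
  LinearMap.mkContinuous
    { toFun := fun f => f k
      map_add' := fun f g => by exact congrFun (lp.coeFn_add f g) k
      map_smul' := fun c f => by exact congrFun (lp.coeFn_smul c f) k }
    1 (fun f => by rw [one_mul]; exact lp.norm_apply_le_norm hp f k)

lemma lpCoord_apply (hp : p ≠ 0) (k : ℕ) (f : lp (fun _ : ℕ => ℂ) p) :
    lpCoord hp k f = f k := rfl

lemma lpCoord_norm (hp : p ≠ 0) (k : ℕ) : ‖lpCoord hp k‖ ≤ 1 :=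
  LinearMap.mkContinuous_norm_le _ zero_le_one _

lemma lpCoord_single (hp : p ≠ 0) (k j : ℕ) :
    lpCoord hp k (lp.single p j (1:ℂ)) = if j = k then 1 else 0 := by
  rw [lpCoord_apply]
  by_cases h : k = j
  · subst h
    rw [lp.single_apply_self, if_pos rfl]
  · rw [lp.single_apply_ne p j _ h, if_neg (fun hh => h hh.symm)]

theorem lp_norm_formula (hp1 : 1 < p) (hpt : p ≠ ∞) {q : ℝ}
    (hpq : p.toReal.HolderConjugate q) (g : lp (fun _ : ℕ => ℂ) p →L[ℂ] ℂ) :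
    (Summable fun j => ‖g (lp.single p j (1:ℂ))‖ ^ q) ∧
      ‖g‖ ^ q = ∑' j, ‖g (lp.single p j (1:ℂ))‖ ^ q := by
  have hp0 : p ≠ 0 := by
    intro h; rw [h] at hp1; exact (not_lt.mpr bot_le) hp1
  set pr := p.toReal with hpr
  have hpr0 : 0 < pr := ENNReal.toReal_pos hp0 hpt
  have hq1 : 1 < q := hpq.symm.lt
  have hq0 : 0 < q := hpq.symm.pos
  have hqne0 : q ≠ 0 := hpq.symm.ne_zero
  have hqm1 : q - 1 ≠ 0 := by
    intro h
    have : q = 1 := by linarith [sub_eq_zero.mp h]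
    rw [this] at hq1; norm_num at hq1
  set c : ℕ → ℂ := fun j => g (lp.single p j 1) with hcdef
  set d : ℕ → ℂ := fun j => (starRingEnd ℂ) (c j) * ((‖c j‖ ^ (q - 2) : ℝ) : ℂ) with hddef
  have hdnorm : ∀ j, ‖d j‖ = ‖c j‖ ^ (q - 1) := by
    intro j
    by_cases h : c j = 0
    · simp only [hddef, h, map_zero, norm_zero, zero_mul]
      rw [Real.zero_rpow hqm1]
    · simp only [hddef]
      rw [norm_mul, RCLike.norm_conj, Complex.norm_real, Real.norm_eq_abs,
        abs_of_nonneg (Real.rpow_nonneg (norm_nonneg _) _)]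
      nth_rewrite 1 [← Real.rpow_one ‖c j‖]
      rw [← Real.rpow_add (norm_pos_iff.mpr h)]
      congr 1; ring
  have hdc : ∀ j, d j * c j = ((‖c j‖ ^ q : ℝ) : ℂ) := by
    intro j
    by_cases h : c j = 0
    · simp only [hddef, h, map_zero, norm_zero, zero_mul, mul_zero]
      rw [Real.zero_rpow hqne0]
      simp
    · have h2 : ((‖c j‖ ^ q : ℝ) : ℂ) = ((‖c j‖ ^ (2:ℝ) : ℝ):ℂ) * ((‖c j‖ ^ (q-2) : ℝ):ℂ) := by
        rw [← Complex.ofReal_mul, ← Real.rpow_add (norm_pos_iff.mpr h)]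
        norm_num
      have h3 : (starRingEnd ℂ) (c j) * c j = ((‖c j‖ ^ (2:ℝ) : ℝ):ℂ) := by
        rw [mul_comm, Complex.mul_conj]
        rw [Real.rpow_two]
        norm_cast
        rw [Complex.normSq_eq_norm_sq]
      calc d j * c j = ((starRingEnd ℂ) (c j) * c j) * ((‖c j‖ ^ (q-2) : ℝ):ℂ) := by
            rw [hddef]; ring
        _ = ((‖c j‖ ^ (2:ℝ) : ℝ):ℂ) * ((‖c j‖ ^ (q-2) : ℝ):ℂ) := by rw [h3]
        _ = ((‖c j‖ ^ q : ℝ) : ℂ) := h2.symm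
  -- the finite-test bound
  have hfin : ∀ s : Finset ℕ, ∑ j ∈ s, ‖c j‖ ^ q ≤ ‖g‖ ^ q := by
    intro s
    set A := ∑ j ∈ s, ‖c j‖ ^ q with hA
    have hA0 : 0 ≤ A :=
      Finset.sum_nonneg fun j _ => Real.rpow_nonneg (norm_nonneg _) _
    set x : lp (fun _ : ℕ => ℂ) p := ∑ j ∈ s, lp.single p j (d j) with hx
    have hgx : g x = ((A : ℝ) : ℂ) := by
      rw [hx, map_sum]
      have : ∀ j ∈ s, g (lp.single p j (d j)) = ((‖c j‖ ^ q : ℝ) : ℂ) := by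
        intro j _
        have hsingle : d j • lp.single (E := fun _ : ℕ => ℂ) p j (1:ℂ)
            = lp.single (E := fun _ : ℕ => ℂ) p j (d j) := by
          rw [← lp.single_smul (E := fun _ : ℕ => ℂ) p j (d j) (1:ℂ), smul_eq_mul, mul_one]
        rw [← hsingle, map_smul, smul_eq_mul]
        exact hdc j
      rw [Finset.sum_congr rfl this, hA]
      push_cast
      rfl
    have hxnorm : ‖x‖ = A ^ pr⁻¹ := by
      have h1 : ‖x‖ ^ pr = A := by
        rw [hx, lp.norm_sum_single hpr0]
        rw [hA]
        refine Finset.sum_congr rfl fun j _ => ?_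
        rw [hdnorm j, ← Real.rpow_mul (norm_nonneg _), hpq.symm.sub_one_mul_conj]
      rw [← h1, Real.rpow_rpow_inv (norm_nonneg x) hpr0.ne']
    have hineq : A ≤ ‖g‖ * A ^ pr⁻¹ := by
      have := g.le_opNorm x
      rw [hgx, hxnorm] at this
      calc A = ‖((A:ℝ):ℂ)‖ := by
            rw [Complex.norm_real, Real.norm_eq_abs, abs_of_nonneg hA0]
        _ ≤ ‖g‖ * A ^ pr⁻¹ := this
    by_cases hAz : A = 0
    · rw [hAz]; exact Real.rpow_nonneg (norm_nonneg _) _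
    · have hApos : 0 < A := lt_of_le_of_ne hA0 (Ne.symm hAz)
      have h5 : A ^ q⁻¹ ≤ ‖g‖ := by
        rw [← hpq.one_sub_inv]
        have h6 : A ^ (1 - pr⁻¹) * A ^ pr⁻¹ = A := by
          rw [← Real.rpow_add hApos]
          norm_num
        have h7 : 0 < A ^ pr⁻¹ := Real.rpow_pos_of_pos hApos _
        calc A ^ (1 - pr⁻¹) = A / A ^ pr⁻¹ := by
              rw [eq_div_iff h7.ne', h6]
          _ ≤ ‖g‖ := by
              rw [div_le_iff₀ h7]
              calc A ≤ ‖g‖ * A ^ pr⁻¹ := hineq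
                _ = ‖g‖ * A ^ pr⁻¹ := rfl
      calc A = (A ^ q⁻¹) ^ q := by rw [Real.rpow_inv_rpow hA0 hqne0]
        _ ≤ ‖g‖ ^ q := Real.rpow_le_rpow (Real.rpow_nonneg hA0 _) h5 hq0.le
  have hsummable : Summable fun j => ‖c j‖ ^ q :=
    summable_of_sum_le (fun j => Real.rpow_nonneg (norm_nonneg _) _) hfin
  refine ⟨hsummable, le_antisymm ?_ (hsummable.tsum_le_of_sum_le hfin)⟩
  -- the Hölder bound
  set Sq := ∑' j, ‖c j‖ ^ q with hSq
  have hSq0 : 0 ≤ Sq := tsum_nonneg fun j => Real.rpow_nonneg (norm_nonneg _) _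
  have hgle : ‖g‖ ≤ Sq ^ q⁻¹ := by
    refine g.opNorm_le_bound (Real.rpow_nonneg hSq0 _) fun x => ?_
    have hx1 : HasSum (fun j => lp.single (E := fun _ : ℕ => ℂ) p j (x j)) x :=
      lp.hasSum_single hpt x
    have hx2 : HasSum (fun j => x j * c j) (g x) := by
      have := g.hasSum hx1
      refine this.congr_fun fun j => ?_
      have hsingle : x j • lp.single (E := fun _ : ℕ => ℂ) p j (1:ℂ)
          = lp.single (E := fun _ : ℕ => ℂ) p j (x j) := by
        rw [← lp.single_smul (E := fun _ : ℕ => ℂ) p j (x j) (1:ℂ), smul_eq_mul, mul_one]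
      rw [← hsingle, map_smul, smul_eq_mul]
    have hxsum : Summable fun j => ‖x j‖ ^ pr := (lp.memℓp x).summable hpr0
    obtain ⟨hmulsum, hmulle⟩ :=
      Real.summable_and_inner_le_Lp_mul_Lq_tsum_of_nonneg hpq (fun j => norm_nonneg (x j))
        (fun j => norm_nonneg (c j)) hxsum hsummable
    have h8 : ‖g x‖ ≤ ∑' j, ‖x j‖ * ‖c j‖ := by
      rw [← hx2.tsum_eq]
      calc ‖∑' j, x j * c j‖ ≤ ∑' j, ‖x j * c j‖ :=
            norm_tsum_le_tsum_norm (by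
              refine hmulsum.congr fun j => ?_
              rw [norm_mul])
        _ = ∑' j, ‖x j‖ * ‖c j‖ := tsum_congr fun j => by rw [norm_mul]
    have h9 : (∑' j, ‖x j‖ ^ pr) ^ (1/pr) = ‖x‖ := by
      rw [← lp.norm_rpow_eq_tsum hpr0, one_div,
        Real.rpow_rpow_inv (norm_nonneg x) hpr0.ne']
    calc ‖g x‖ ≤ ∑' j, ‖x j‖ * ‖c j‖ := h8
      _ ≤ (∑' j, ‖x j‖ ^ pr) ^ (1/pr) * (∑' j, ‖c j‖ ^ q) ^ (1/q) := hmulle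
      _ = Sq ^ q⁻¹ * ‖x‖ := by rw [h9, hSq, one_div]; ring
  calc ‖g‖ ^ q ≤ (Sq ^ q⁻¹) ^ q :=
        Real.rpow_le_rpow (norm_nonneg _) hgle hq0.le
    _ = Sq := Real.rpow_inv_rpow hSq0 hqne0

end LpInst

noncomputable section C0Inst

/-- basis vector in c₀ -/
def c0e (j : ℕ) : C₀(ℕ, ℂ) :=
  ⟨⟨fun t => if t = j then 1 else 0, continuous_of_discreteTopology⟩, by
    rw [cocompact_eq_cofinite]
    have hev : ∀ᶠ t in Filter.cofinite, (fun t => if t = j then (1:ℂ) else 0) t = 0 := by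
      refine Filter.eventually_cofinite.mpr (Set.Finite.subset (Set.finite_singleton j) ?_)
      intro t ht
      simp only [Set.mem_setOf_eq] at ht
      by_contra h
      simp only [Set.mem_singleton_iff] at h
      exact ht (if_neg h)
    exact Filter.Tendsto.congr' (Filter.EventuallyEq.symm hev) tendsto_const_nhds⟩

lemma c0e_apply (j t : ℕ) : c0e j t = if t = j then 1 else 0 := rfl

/-- coordinate functional on c₀ -/
def c0Coord (k : ℕ) : C₀(ℕ, ℂ) →L[ℂ] ℂ :=
  LinearMap.mkContinuous
    { toFun := fun f => f k
      map_add' := fun f g => rfl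
      map_smul' := fun c f => rfl }
    1 (fun f => by
      rw [one_mul]
      calc ‖f k‖ ≤ ‖f.toBCF‖ := f.toBCF.norm_coe_le_norm k
        _ = ‖f‖ := ZeroAtInftyContinuousMap.norm_toBCF_eq_norm)

lemma c0Coord_apply (k : ℕ) (f : C₀(ℕ, ℂ)) : c0Coord k f = f k := rfl

lemma c0Coord_norm (k : ℕ) : ‖c0Coord k‖ ≤ 1 :=
  LinearMap.mkContinuous_norm_le _ zero_le_one _

lemma c0Coord_single (k j : ℕ) : c0Coord k (c0e j) = if j = k then 1 else 0 := by
  rw [c0Coord_apply, c0e_apply]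
  by_cases h : k = j
  · subst h; simp
  · rw [if_neg h, if_neg (fun hh => h hh.symm)]

lemma c0_norm_le_of_forall {f : C₀(ℕ, ℂ)} {C : ℝ} (hC : 0 ≤ C)
    (h : ∀ t, ‖f t‖ ≤ C) : ‖f‖ ≤ C := by
  rw [← ZeroAtInftyContinuousMap.norm_toBCF_eq_norm]
  exact (BoundedContinuousFunction.norm_le hC).mpr h

lemma c0e_norm (j : ℕ) : ‖c0e j‖ ≤ 1 := by
  refine c0_norm_le_of_forall zero_le_one fun t => ?_
  rw [c0e_apply]
  by_cases h : t = j
  · rw [if_pos h, norm_one]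
  · rw [if_neg h, norm_zero]; norm_num

lemma c0_coord_le_norm (f : C₀(ℕ, ℂ)) (t : ℕ) : ‖f t‖ ≤ ‖f‖ := by
  calc ‖f t‖ ≤ ‖f.toBCF‖ := f.toBCF.norm_coe_le_norm t
    _ = ‖f‖ := ZeroAtInftyContinuousMap.norm_toBCF_eq_norm

lemma c0_sum_eval (s : Finset ℕ) (x : ℕ → ℂ) (t : ℕ) :
    (∑ j ∈ s, x j • c0e j) t = if t ∈ s then x t else 0 := by
  have h1 : (∑ j ∈ s, x j • c0e j) t = c0Coord t (∑ j ∈ s, x j • c0e j) := rfl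
  rw [h1, map_sum]
  have h2 : ∀ j ∈ s, c0Coord t (x j • c0e j) = if t = j then x j else 0 := by
    intro j _
    rw [map_smul, smul_eq_mul, c0Coord_apply, c0e_apply]
    by_cases h : t = j
    · rw [if_pos h, if_pos h, mul_one]
    · rw [if_neg h, if_neg h, mul_zero]
  rw [Finset.sum_congr rfl h2, Finset.sum_ite_eq]

lemma c0_hasSum (x : C₀(ℕ, ℂ)) : HasSum (fun j => x j • c0e j) x := by
  rw [HasSum]
  rw [SummationFilter.unconditional_filter, Metric.tendsto_atTop]
  intro ε hε
  have hco := x.zero_at_infty'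
  rw [cocompact_eq_cofinite] at hco
  have hev : ∀ᶠ t in Filter.cofinite, dist (x t) 0 < ε/2 :=
    hco.eventually (Metric.ball_mem_nhds 0 (by linarith))
  have hfin : {t : ℕ | ¬ dist (x t) 0 < ε/2}.Finite := Filter.eventually_cofinite.mp hev
  refine ⟨hfin.toFinset, fun s hs => ?_⟩
  rw [dist_eq_norm]
  have hle : ‖(∑ j ∈ s, x j • c0e j) - x‖ ≤ ε/2 := by
    refine c0_norm_le_of_forall (by linarith) fun t => ?_
    have heval : ((∑ j ∈ s, x j • c0e j) - x) t = (if t ∈ s then x t else 0) - x t := by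
      have : ((∑ j ∈ s, x j • c0e j) - x) t = (∑ j ∈ s, x j • c0e j) t - x t := rfl
      rw [this, c0_sum_eval]
    rw [heval]
    by_cases h : t ∈ s
    · rw [if_pos h, sub_self, norm_zero]; linarith
    · rw [if_neg h, zero_sub, norm_neg]
      have ht : t ∉ hfin.toFinset := fun hc => h (hs hc)
      rw [Set.Finite.mem_toFinset] at ht
      simp only [Set.mem_setOf_eq, not_not] at ht
      rw [dist_zero_right] at ht
      linarith
  linarith

theorem c0_norm_formula (g : C₀(ℕ, ℂ) →L[ℂ] ℂ) :
    (Summable fun j => ‖g (c0e j)‖) ∧ ‖g‖ = ∑' j, ‖g (c0e j)‖ := by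
  set c : ℕ → ℂ := fun j => g (c0e j) with hcdef
  set d : ℕ → ℂ := fun j =>
    if c j = 0 then 0 else (starRingEnd ℂ) (c j) / ((‖c j‖ : ℝ) : ℂ) with hddef
  have hdle : ∀ j, ‖d j‖ ≤ 1 := by
    intro j
    by_cases h : c j = 0
    · simp [hddef, h]
    · simp only [hddef, if_neg h]
      rw [norm_div, RCLike.norm_conj, Complex.norm_real, Real.norm_eq_abs,
        abs_of_nonneg (norm_nonneg _), div_self (norm_ne_zero_iff.mpr h)]
  have hdc : ∀ j, d j * c j = ((‖c j‖ : ℝ) : ℂ) := by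
    intro j
    by_cases h : c j = 0
    · simp [hddef, h]
    · simp only [hddef, if_neg h]
      have hnz : ((‖c j‖ : ℝ) : ℂ) ≠ 0 := by
        simpa using norm_ne_zero_iff.mpr h
      rw [div_mul_eq_mul_div, mul_comm ((starRingEnd ℂ) (c j)) (c j), Complex.mul_conj,
        Complex.normSq_eq_norm_sq, div_eq_iff hnz]
      norm_cast
      ring
  have hfin : ∀ s : Finset ℕ, ∑ j ∈ s, ‖c j‖ ≤ ‖g‖ := by
    intro s
    set A := ∑ j ∈ s, ‖c j‖ with hA
    have hA0 : 0 ≤ A := Finset.sum_nonneg fun j _ => norm_nonneg _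
    set x : C₀(ℕ, ℂ) := ∑ j ∈ s, d j • c0e j with hx
    have hxnorm : ‖x‖ ≤ 1 := by
      refine c0_norm_le_of_forall zero_le_one fun t => ?_
      rw [hx]
      have := c0_sum_eval s d t
      rw [this]
      by_cases h : t ∈ s
      · rw [if_pos h]; exact hdle t
      · rw [if_neg h, norm_zero]; norm_num
    have hgx : g x = ((A : ℝ) : ℂ) := by
      rw [hx, map_sum]
      have : ∀ j ∈ s, g (d j • c0e j) = ((‖c j‖ : ℝ) : ℂ) := by
        intro j _
        rw [map_smul, smul_eq_mul]
        exact hdc j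
      rw [Finset.sum_congr rfl this, hA]
      push_cast
      rfl
    calc A = ‖g x‖ := by
          rw [hgx, Complex.norm_real, Real.norm_eq_abs, abs_of_nonneg hA0]
      _ ≤ ‖g‖ * ‖x‖ := g.le_opNorm x
      _ ≤ ‖g‖ * 1 := by
          have := norm_nonneg g
          nlinarith
      _ = ‖g‖ := by ring
  have hsummable : Summable fun j => ‖c j‖ :=
    summable_of_sum_le (fun j => norm_nonneg _) hfin
  refine ⟨hsummable, le_antisymm ?_ (hsummable.tsum_le_of_sum_le hfin)⟩
  set N := ∑' j, ‖c j‖ with hN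
  have hN0 : 0 ≤ N := tsum_nonneg fun j => norm_nonneg _
  refine g.opNorm_le_bound hN0 fun x => ?_
  have hx2 : HasSum (fun j => x j * c j) (g x) := by
    have := g.hasSum (c0_hasSum x)
    refine this.congr_fun fun j => ?_
    rw [map_smul, smul_eq_mul]
  have hmaj : Summable fun j => ‖x‖ * ‖c j‖ := hsummable.mul_left _
  have hmulsum : Summable fun j => ‖x j * c j‖ := by
    refine Summable.of_nonneg_of_le (fun j => norm_nonneg _) (fun j => ?_) hmaj
    rw [norm_mul]
    exact mul_le_mul_of_nonneg_right (c0_coord_le_norm x j) (norm_nonneg _)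
  calc ‖g x‖ ≤ ∑' j, ‖x j * c j‖ := by
        rw [← hx2.tsum_eq]
        exact norm_tsum_le_tsum_norm hmulsum
    _ ≤ ∑' j, ‖x‖ * ‖c j‖ := by
        refine hmulsum.tsum_le_tsum (fun j => ?_) hmaj
        rw [norm_mul]
        exact mul_le_mul_of_nonneg_right (c0_coord_le_norm x j) (norm_nonneg _)
    _ = N * ‖x‖ := by rw [tsum_mul_left, hN]; ring

end C0Inst

theorem c0_case : AdjointIsometriesNowhereDense C₀(ℕ, ℂ) := by
  refine aind_abstract (q := 1) le_rfl (by norm_num) c0e c0Coord c0Coord_single c0e_norm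
    (c0Coord_norm 0) ?_ ?_
  · intro g
    have := (c0_norm_formula g).1
    refine this.congr fun j => ?_
    rw [Real.rpow_one]
  · intro g
    have h := (c0_norm_formula g).2
    rw [Real.rpow_one]
    rw [h]
    exact tsum_congr fun j => by rw [Real.rpow_one]

theorem lp_case (p : ℝ≥0∞) [Fact (1 ≤ p)] (hp1 : 1 < p) (hp2 : p ≠ 2) (hpt : p ≠ ∞) :
    AdjointIsometriesNowhereDense (lp (fun _ : ℕ => ℂ) p) := by
  have hp0 : p ≠ 0 := by
    intro h; rw [h] at hp1; exact (not_lt.mpr bot_le) hp1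
  have hpr1 : 1 < p.toReal := by
    have h1 : (1:ℝ≥0∞).toReal < p.toReal :=
      (ENNReal.toReal_lt_toReal (by norm_num) hpt).mpr hp1
    simpa using h1
  set q := Real.conjExponent p.toReal with hqdef
  have hpq : p.toReal.HolderConjugate q := Real.HolderConjugate.conjExponent hpr1
  have hq1 : 1 ≤ q := hpq.symm.lt.le
  have hq2 : q ≠ 2 := by
    intro h
    apply hp2
    have hpr2 : p.toReal = 2 := by
      have h1 := hpq.inv_add_inv_eq_one
      rw [h] at h1
      have h2 : p.toReal⁻¹ = 2⁻¹ := by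
        have : (2:ℝ)⁻¹ + 2⁻¹ = 1 := by norm_num
        linarith
      have h3 : (0:ℝ) < p.toReal := by linarith
      field_simp at h2
      linarith
    have := (ENNReal.toReal_eq_toReal_iff' hpt (by norm_num : (2:ℝ≥0∞) ≠ ∞)).mp
    apply this
    rw [hpr2]
    norm_num
  refine aind_abstract hq1 hq2 (fun j => lp.single p j (1:ℂ)) (lpCoord hp0)
    (fun k j => lpCoord_single hp0 k j) (fun j => ?_) (lpCoord_norm hp0 0)
    (fun g => (lp_norm_formula hp1 hpt hpq g).1)
    (fun g => (lp_norm_formula hp1 hpt hpq g).2)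
  have := lp.norm_single (E := fun _ : ℕ => ℂ) (pos_iff_ne_zero.mpr hp0) j (1:ℂ)
  rw [this, norm_one]


/-- Let `X = c₀`, or `X = ℓ_p` with `1 < p < ∞` and `p ≠ 2`. The set of all
`T ∈ 𝔅₁(X)` such that `T*` is an isometry of `X*` is nowhere dense in `(𝔅₁(X), SOT)`.
In particular, for a typical `T ∈ (𝔅₁(X), SOT)`, `T*` is not an isometry. -/
theorem adjoint_isometries_nowhere_dense_c0_lp :
    AdjointIsometriesNowhereDense C₀(ℕ, ℂ) ∧
    (∀ (p : ℝ≥0∞) [Fact (1 ≤ p)], 1 < p → p ≠ 2 → p ≠ ∞ →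
      AdjointIsometriesNowhereDense (lp (fun _ : ℕ => ℂ) p)) := by
  exact ⟨c0_case, fun p _ hp1 hp2 hpt => lp_case p hp1 hp2 hpt⟩
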